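/- arXiv:1012.3777 — 2 statements merged into one kernel-verified Lean document; each statement's English description precedes it below -/
import Mathlib

section
/- Let Y be a scheme of finite type over Spec ℤ. If Y has an F̄_p-rational point for infinitely many primes p, then Y has a Q̄-rational point. -/
/-!
An `F̄_p`-point of `Y` lands in one of the finitely many affine opens covering `Y`, so some
affine open `Spec R`, with `R` a finitely generated `ℤ`-algebra, receives ring maps from `R`
into fields of infinitely many characteristics. No nonzero integer can vanish in such an `R`,
so `ℚ ⊗[ℤ] R` is a nonzero finitely generated `ℚ`-algebra, and by the Nullstellensatz it
maps to `Q̄`.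
-/

open AlgebraicGeometry CategoryTheory TensorProduct

universe u v

def residueCharacteristics (R : Type u) [CommRing R] : Set ℕ :=
  {p | ∃ (K : Type u) (_ : Field K) (_ : CharP K p), Nonempty (R →+* K)}

theorem charZero_of_residueCharacteristics_infinite {R : Type u} [CommRing R]
    (h : (residueCharacteristics R).Infinite) : CharZero R := by
  refine charZero_of_inj_zero fun n hn => ?_
  by_contra hn0
  obtain ⟨p, ⟨K, _, _, ⟨φ⟩⟩, hnp⟩ := h.exists_gt n
  have hpn : p ∣ n := (CharP.cast_eq_zero_iff K p n).mp (by rw [← map_natCast φ, hn, map_zero])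
  exact absurd (Nat.le_of_dvd (Nat.pos_of_ne_zero hn0) hpn) (not_le.mpr hnp)

theorem nontrivial_rat_tensor_of_charZero (R : Type u) [CommRing R] [CharZero R] :
    Nontrivial (ℚ ⊗[ℤ] R) := by
  let := Algebra.TensorProduct.rightAlgebra (R := ℤ) (A := ℚ) (B := R)
  have : IsLocalization (Algebra.algebraMapSubmonoid R (nonZeroDivisors ℤ)) (ℚ ⊗[ℤ] R) :=
    IsLocalization.tensorRight ℚ (nonZeroDivisors ℤ)
  rw [← not_subsingleton_iff_nontrivial,
    IsLocalization.subsingleton_iff (M := Algebra.algebraMapSubmonoid R (nonZeroDivisors ℤ))]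
  rintro ⟨n, hn, hn0⟩
  exact nonZeroDivisors.ne_zero hn (by simpa using hn0)

theorem Algebra.FiniteType.nonempty_algHom_of_isAlgClosed (k A K : Type*) [Field k] [CommRing A]
    [Nontrivial A] [Algebra k A] [Algebra.FiniteType k A] [Field K] [IsAlgClosed K]
    [Algebra k K] : Nonempty (A →ₐ[k] K) := by
  obtain ⟨m, hm⟩ := Ideal.exists_maximal A
  let := Ideal.Quotient.field m
  have : Algebra.FiniteType k (A ⧸ m) := .of_surjective _ (Ideal.Quotient.mkₐ_surjective k m)
  have : Module.Finite k (A ⧸ m) := finite_of_finite_type_of_isJacobsonRing k (A ⧸ m)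
  have : Algebra.IsAlgebraic k (A ⧸ m) := .of_finite k _
  exact ⟨(IsAlgClosed.lift : A ⧸ m →ₐ[k] K).comp (Ideal.Quotient.mkₐ k m)⟩

theorem nonempty_ringHom_of_charZero (R : Type u) (K : Type v) [CommRing R]
    [Algebra.FiniteType ℤ R] [CharZero R] [Field K] [CharZero K] [IsAlgClosed K] :
    Nonempty (R →+* K) := by
  have := nontrivial_rat_tensor_of_charZero R
  obtain ⟨φ⟩ := Algebra.FiniteType.nonempty_algHom_of_isAlgClosed ℚ (ℚ ⊗[ℤ] R) K
  exact ⟨φ.toRingHom.comp Algebra.TensorProduct.includeRight.toRingHom⟩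

theorem nonempty_ringHom_sections_of_mem {Y : Scheme.{u}} {K : Type u} [Field K]
    (g : Spec (.of K) ⟶ Y) {U : Y.Opens} (hU : g default ∈ U) : Nonempty (Γ(Y, U) →+* K) := by
  have hle : ⊤ ≤ g ⁻¹ᵁ U := fun x _ => by rwa [Unique.eq_default x]
  exact ⟨(Scheme.ΓSpecIso (.of K)).hom.hom.comp (g.appLE U ⊤ hle).hom⟩

theorem finiteType_sections_of_isAffineOpen {Y : Scheme.{0}} (f : Y ⟶ Spec (.of ℤ))
    [LocallyOfFiniteType f] (U : Y.affineOpens) : Algebra.FiniteType ℤ Γ(Y, U) := by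
  have hf := HasRingHomProperty.appLE @LocallyOfFiniteType f ‹_› ⟨⊤, isAffineOpen_top _⟩ U
    (by simp)
  have hΓ : algebraMap ℤ Γ(Y, U) = (f.appLE ⊤ U (by simp)).hom.comp
      (Scheme.ΓSpecIso (.of ℤ)).inv.hom := Subsingleton.elim _ _
  rw [← RingHom.finiteType_algebraMap, hΓ]
  exact hf.comp
    (.of_surjective _ (Scheme.ΓSpecIso (.of ℤ)).commRingCatIsoToRingEquiv.symm.surjective)

theorem point_over_Qbar_of_points_over_Fpbar
    (Y : Scheme.{0})
    (hft : LocallyOfFiniteType (AlgebraicGeometry.specZIsTerminal.from Y))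
    (hqc : QuasiCompact (AlgebraicGeometry.specZIsTerminal.from Y))
    (hinf : {p : ℕ | p.Prime ∧ ∃ (K : Type) (_ : Field K) (_ : IsAlgClosed K)
        (_ : CharP K p), Nonempty (Spec (CommRingCat.of K) ⟶ Y)}.Infinite) :
    Nonempty (Spec (CommRingCat.of (AlgebraicClosure ℚ)) ⟶ Y) := by
  have : CompactSpace Y := QuasiCompact.compactSpace_of_compactSpace (specZIsTerminal.from Y)
  obtain ⟨s, hs⟩ := isCompact_univ.elim_finite_subcover (fun U : Y.affineOpens => (U : Set Y))
    (fun U => U.1.isOpen) fun y _ =>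
      Set.mem_iUnion.2 (TopologicalSpace.Opens.mem_iSup.1 ((iSup_affineOpens_eq_top Y).ge trivial))
  obtain ⟨U, -, hU⟩ : ∃ U ∈ s, (residueCharacteristics Γ(Y, U)).Infinite := by
    by_contra! h
    refine hinf ((s.finite_toSet.biUnion h).subset ?_)
    rintro p ⟨-, K, _, -, _, ⟨g⟩⟩
    obtain ⟨U, hUs, hgU⟩ := Set.mem_iUnion₂.1 (hs (Set.mem_univ (g default)))
    exact Set.mem_biUnion hUs ⟨K, _, ‹_›, nonempty_ringHom_sections_of_mem g hgU⟩
  have := finiteType_sections_of_isAffineOpen (specZIsTerminal.from Y) U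
  have := charZero_of_residueCharacteristics_infinite hU
  obtain ⟨φ⟩ := nonempty_ringHom_of_charZero Γ(Y, U) (AlgebraicClosure ℚ)
  exact ⟨Spec.map (CommRingCat.ofHom φ) ≫ U.2.fromSpec⟩
end

section
/- Let P(t) ∈ ℤ[t] be a monic polynomial of even degree n whose complex roots all have absolute value 1 and are closed under complex conjugation (P has real coefficients). If not all roots of P are roots of unity, then the number of roots of P (counted with multiplicity) that are roots of unity is even. -/
open scoped Classical in
/-- The number of complex roots of `P` (with multiplicity) that are roots of unity. -/
noncomputable def rootOfUnityCount (P : Polynomial ℤ) : ℕ :=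
  Multiset.card ((P.aroots ℂ).filter fun z => ∃ m : ℕ, 0 < m ∧ z ^ m = 1)

/-!
A root of `P` that is not a root of unity cannot be real, because the only real points of
the unit circle are `±1`. Since conjugation preserves roots of unity, these non-real roots form
a conjugation-symmetric multiset, which splits into its upper and lower half-plane parts,
exchanged by conjugation; so there is an even number of them. The roots of unity make up the
remaining `n` minus an even number.
-/

open ComplexConjugate

theorem Multiset.count_filter_apply_eq_count_filter {α : Type*} [DecidableEq α] {s : Multiset α}
    {f : α → α} {p : α → Prop} [DecidablePred p] (hs : ∀ a, s.count (f a) = s.count a)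
    (hp : ∀ a, p (f a) ↔ p a) (a : α) :
    (s.filter p).count (f a) = (s.filter p).count a := by
  simp only [Multiset.count_filter, hs, hp]

namespace Complex

theorem isOfFinOrder_conj_iff {z : ℂ} : IsOfFinOrder (conj z) ↔ IsOfFinOrder z :=
  Function.Injective.isOfFinOrder_iff (f := (starRingEnd ℂ : ℂ →* ℂ)) (RingHom.injective _)

theorem isOfFinOrder_of_norm_eq_one_of_im_eq_zero {z : ℂ} (hnorm : ‖z‖ = 1) (him : z.im = 0) :
    IsOfFinOrder z := by
  have hsq : z ^ 2 = 1 := by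
    have h := mul_conj' z
    rw [conj_eq_iff_im.mpr him, hnorm] at h
    simpa [sq] using h
  exact isOfFinOrder_iff_pow_eq_one.mpr ⟨2, two_pos, hsq⟩

theorem filter_im_neg_eq_map_conj {s : Multiset ℂ} (hs : ∀ z, s.count (conj z) = s.count z) :
    s.filter (fun z => z.im < 0) = (s.filter (fun z => 0 < z.im)).map conj := by
  ext w
  rw [← conj_conj w, Multiset.count_map_eq_count' _ _ (RingHom.injective _), conj_conj,
    Multiset.count_filter, Multiset.count_filter, hs]
  simp

theorem even_card_of_count_conj_eq {s : Multiset ℂ} (hs : ∀ z, s.count (conj z) = s.count z)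
    (hnonreal : ∀ z ∈ s, z.im ≠ 0) : Even (Multiset.card s) := by
  have hlower : s.filter (fun z => ¬ 0 < z.im) = s.filter (fun z => z.im < 0) :=
    Multiset.filter_congr fun z hz => by
      rw [not_lt, le_iff_lt_or_eq, or_iff_left (hnonreal z hz)]
  rw [← Multiset.filter_add_not (fun z => 0 < z.im) s, Multiset.card_add, hlower,
    filter_im_neg_eq_map_conj hs, Multiset.card_map]
  exact ⟨_, rfl⟩

end Complex

theorem even_number_of_roots_of_unity_general
    (P : Polynomial ℤ)
    (n : ℕ) (hn : Even n) (hdeg : P.natDegree = n)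
    (habs : ∀ z ∈ P.aroots ℂ, ‖z‖ = 1)          -- all roots on unit circle
    (hconj : ∀ z : ℂ, (P.aroots ℂ).count (starRingEnd ℂ z) = (P.aroots ℂ).count z)
      -- roots closed under complex conjugation (with multiplicity)
    : Even (rootOfUnityCount P) := by
  classical
  set isRootOfUnity : ℂ → Prop := fun z => ∃ m : ℕ, 0 < m ∧ z ^ m = 1
  have hroot_iff (z : ℂ) : isRootOfUnity z ↔ IsOfFinOrder z := isOfFinOrder_iff_pow_eq_one.symm
  set T := (P.aroots ℂ).filter (fun z => ¬ isRootOfUnity z)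
  have hcard : rootOfUnityCount P + Multiset.card T = n := by
    rw [rootOfUnityCount, ← Multiset.card_add, Multiset.filter_add_not,
      IsAlgClosed.card_aroots_eq_natDegree, hdeg]
  have hT : Even (Multiset.card T) := by
    refine Complex.even_card_of_count_conj_eq
      (Multiset.count_filter_apply_eq_count_filter hconj fun z => ?_) fun z hz him => ?_
    · simp only [hroot_iff, Complex.isOfFinOrder_conj_iff]
    · obtain ⟨hzroot, hznot⟩ := Multiset.mem_filter.mp hz
      exact hznot ((hroot_iff z).mpr
        (Complex.isOfFinOrder_of_norm_eq_one_of_im_eq_zero (habs z hzroot) him))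
  rw [← hcard] at hn
  exact (Nat.even_add.mp hn).mpr hT

theorem even_number_of_roots_of_unity
    (P : Polynomial ℤ) (hmonic : P.Monic)
    (n : ℕ) (hn : Even n) (hdeg : P.natDegree = n)
    (habs : ∀ z ∈ P.aroots ℂ, ‖z‖ = 1)          -- all roots on unit circle
    (hconj : ∀ z : ℂ, (P.aroots ℂ).count (starRingEnd ℂ z) = (P.aroots ℂ).count z)
      -- roots closed under complex conjugation (with multiplicity)
    (hnotall : ¬ ∀ z ∈ P.aroots ℂ, ∃ m : ℕ, 0 < m ∧ z ^ m = 1) :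
    Even (rootOfUnityCount P) :=
  even_number_of_roots_of_unity_general P n hn hdeg habs hconj
end
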